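/- Let B be a bounded linear operator with closed range on a complex Hilbert space H such that R(B) ⊆ R(B*), let H₂ be a closed subspace of H invariant under B, and let Z = B restricted to H₂ (an operator on H₂). Then the closure of R(Z) is contained in R(Z*). Consequently, if N(Z*) ⊆ N(Z), then R(Z*) equals the closure of R(Z), and in particular R(Z*) is closed. -/

import Mathlib

/-!
If `B` maps `H₂` into itself and `Z = B|_{H₂}`, then `ι Z = B ι` for the inclusion `ι`, and
taking adjoints gives `Z* P = P B*` with `P` the orthogonal projection onto `H₂`. A point `z` of
the closure of `R(Z)` lies in the closed space `R(B) ⊆ R(B*)`, say `z = B* w`, and then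
`z = P z = Z* (P w)`. For the converse inclusion, `N(Z*) ⊆ N(Z)` gives
`R(Z*) ⊆ N(Z)ᗮ ⊆ N(Z*)ᗮ = closure R(Z)`.
-/

section

open ContinuousLinearMap

variable {𝕜 E : Type*} [RCLike 𝕜] [NormedAddCommGroup E] [InnerProductSpace 𝕜 E] [CompleteSpace E]

theorem ContinuousLinearMap.range_adjoint_le_topologicalClosure_range_of_ker_adjoint_le
    (T : E →L[𝕜] E) (h : (adjoint T).ker ≤ T.ker) :
    (adjoint T).range ≤ T.range.topologicalClosure := by
  calc (adjoint T).range
      ≤ (adjoint T).range.topologicalClosure := Submodule.le_topologicalClosure _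
    _ = T.kerᗮ := (orthogonal_ker T).symm
    _ ≤ (adjoint T).kerᗮ := Submodule.orthogonal_le h
    _ = T.range.topologicalClosure := by rw [orthogonal_ker, adjoint_adjoint]

section Restriction

variable {K : Submodule 𝕜 E} [CompleteSpace K] {B : E →L[𝕜] E} {Z : K →L[𝕜] K}

theorem adjoint_restrict_comp_orthogonalProjectionOnto (hZ : ∀ x : K, (Z x : E) = B x) :
    adjoint Z ∘L K.orthogonalProjectionOnto = K.orthogonalProjectionOnto ∘L adjoint B := by
  have hcomm : K.subtypeL ∘L Z = B ∘L K.subtypeL := ContinuousLinearMap.ext hZ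
  simpa only [adjoint_comp, Submodule.adjoint_subtypeL] using congrArg adjoint hcomm

theorem mem_range_adjoint_restrict_of_mem_range_adjoint (hZ : ∀ x : K, (Z x : E) = B x)
    {z : K} (hz : (z : E) ∈ Set.range (adjoint B)) : z ∈ Set.range (adjoint Z) := by
  obtain ⟨w, hw⟩ := hz
  refine ⟨K.orthogonalProjectionOnto w, ?_⟩
  calc adjoint Z (K.orthogonalProjectionOnto w)
      = K.orthogonalProjectionOnto (adjoint B w) :=
        DFunLike.congr_fun (adjoint_restrict_comp_orthogonalProjectionOnto hZ) w
    _ = z := by rw [hw, Submodule.orthogonalProjectionOnto_mem_subspace_eq_self]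

end Restriction

end

theorem stmt3 {H : Type*} [NormedAddCommGroup H] [InnerProductSpace ℂ H] [CompleteSpace H]
    (B : H →L[ℂ] H) (hBran : IsClosed (Set.range B))
    (hpos : LinearMap.range (B : H →ₗ[ℂ] H) ≤
      LinearMap.range (ContinuousLinearMap.adjoint B : H →ₗ[ℂ] H))
    (H₂ : Submodule ℂ H) [CompleteSpace H₂]
    (Z : H₂ →L[ℂ] H₂) (hZ : ∀ x : H₂, (Z x : H) = B x) :
    closure (Set.range Z) ⊆ Set.range (ContinuousLinearMap.adjoint Z) ∧
    (LinearMap.ker (ContinuousLinearMap.adjoint Z : H₂ →ₗ[ℂ] H₂) ≤ LinearMap.ker (Z : H₂ →ₗ[ℂ] H₂) →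
      Set.range (ContinuousLinearMap.adjoint Z) = closure (Set.range Z) ∧
      IsClosed (Set.range (ContinuousLinearMap.adjoint Z))) := by
  have hclosure : closure (Set.range Z) ⊆ Set.range (ContinuousLinearMap.adjoint Z) := by
    intro z hz
    have hzB : (z : H) ∈ Set.range B := by
      rw [← hBran.closure_eq]
      exact map_mem_closure continuous_subtype_val hz fun _ ⟨x, hx⟩ ↦ ⟨x, hx ▸ (hZ x).symm⟩
    exact mem_range_adjoint_restrict_of_mem_range_adjoint hZ (hpos hzB)
  refine ⟨hclosure, fun hker => ?_⟩
  have hrange : Set.range (ContinuousLinearMap.adjoint Z) = closure (Set.range Z) := by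
    refine Set.Subset.antisymm ?_ hclosure
    simpa only [← SetLike.coe_subset_coe, Submodule.topologicalClosure_coe, LinearMap.coe_range,
      ContinuousLinearMap.coe_coe] using
      Z.range_adjoint_le_topologicalClosure_range_of_ker_adjoint_le hker
  exact ⟨hrange, hrange ▸ isClosed_closure⟩
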